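/- arXiv:2407.14080 — 3 statements merged into one kernel-verified Lean document; each statement's English description precedes it below -/
import Mathlib

section
/- Let G be a graph on n vertices, U ⊆ V with s ≤ |U| ≤ n/2 where n ≥ 4k and k ≤ |U|·n/4. If each non-edge of G is added independently with probability p, then the probability that no edge is added across the cut (U, V∖U), given that the cut currently has k−1 edges, is at most e^{−s·p·n/4}. -/
open scoped Classical

/-- The size of the edge cut `E(U, V \ U)` of `G`: the number of edges with exactly one
endpoint in `U`. -/
noncomputable def cutSize {V : Type*} [Fintype V] (G : SimpleGraph V) (U : Finset V) : ℕ :=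
  ((U ×ˢ Uᶜ).filter (fun p => G.Adj p.1 p.2)).card

/-- The collection `S_k(G)` of nonempty proper vertex subsets with cut size `< k`. -/
noncomputable def smallCuts {V : Type*} [Fintype V] (G : SimpleGraph V) (k : ℕ) :
    Finset (Finset V) :=
  Finset.univ.filter (fun U => U.Nonempty ∧ U ≠ Finset.univ ∧ cutSize G U < k)

/-- `s_k(G)`: the minimum cardinality of a member of `S_k(G)`, or `n` if `S_k(G) = ∅`. -/
noncomputable def sk {V : Type*} [Fintype V] (G : SimpleGraph V) (k : ℕ) : ℕ :=
  if h : ((smallCuts G k).image Finset.card).Nonempty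
    then ((smallCuts G k).image Finset.card).min' h
    else Fintype.card V

theorem one_sub_pow_le_exp_neg_mul {p : ℝ} (hp : p ≤ 1) (m : ℕ) :
    (1 - p) ^ m ≤ Real.exp (-(p * m)) :=
  calc (1 - p) ^ m ≤ Real.exp (-p) ^ m :=
        pow_le_pow_left₀ (by linarith) (by linarith [Real.add_one_le_exp (-p)]) m
    _ = Real.exp (-(p * m)) := by rw [← Real.exp_nat_mul]; ring_nf

/-- `u (n - u) ≥ u n / 2` because `u ≤ n / 2`; removing `k - 1 < u n / 4` pairs leaves more than
`u n / 4 ≥ s n / 4`. -/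
theorem mul_le_four_mul_mul_tsub_tsub {u n s k : ℕ} (hs : s ≤ u) (hhalf : 2 * u ≤ n)
    (hk : 4 * k ≤ u * n) : s * n ≤ 4 * (u * (n - u) - (k - 1)) := by
  have hpairs : u * n ≤ 2 * (u * (n - u)) :=
    calc u * n ≤ u * (2 * (n - u)) := Nat.mul_le_mul_left _ (by omega)
      _ = 2 * (u * (n - u)) := by ring
  have hsn : s * n ≤ u * n := Nat.mul_le_mul_right _ hs
  omega

theorem cut_survival_prob_bound_general {V : Type*}
    (n s k : ℕ)
    (U : Finset V) (hs : s ≤ U.card) (hhalf : 2 * U.card ≤ n)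
    (hkU : 4 * k ≤ U.card * n)
    (p : ℝ) (hp0 : 0 ≤ p) (hp1 : p ≤ 1) :
    (1 - p) ^ (U.card * (n - U.card) - (k - 1)) ≤
      Real.exp (-((s : ℝ) * p * n) / 4) := by
  set m := U.card * (n - U.card) - (k - 1)
  have hm : (s : ℝ) * n ≤ 4 * m := by exact_mod_cast mul_le_four_mul_mul_tsub_tsub hs hhalf hkU
  calc (1 - p) ^ m ≤ Real.exp (-(p * m)) := one_sub_pow_le_exp_neg_mul hp1 m
    _ ≤ Real.exp (-((s : ℝ) * p * n) / 4) := by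
      gcongr
      linarith [mul_le_mul_of_nonneg_left hm hp0]

/-- For a cut `(U, V∖U)` currently of size `k-1`, with `s ≤ |U| ≤ n/2`, `n ≥ 4k` and
`k ≤ |U|·n/4`, the probability that none of the `|U|(n-|U|) - (k-1)` potential non-edges
across the cut is added (each added independently with probability `p`) is at most
`e^{-s·p·n/4}`. -/
theorem cut_survival_prob_bound {V : Type*} [Fintype V] (G : SimpleGraph V)
    (n s k : ℕ) (hn : n = Fintype.card V) (hk : 1 ≤ k) (hnk : 4 * k ≤ n)
    (U : Finset V) (hs : s ≤ U.card) (hhalf : 2 * U.card ≤ n)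
    (hkU : 4 * k ≤ U.card * n)
    (hcut : cutSize G U = k - 1)
    (p : ℝ) (hp0 : 0 ≤ p) (hp1 : p ≤ 1) :
    (1 - p) ^ (U.card * (n - U.card) - (k - 1)) ≤
      Real.exp (-((s : ℝ) * p * n) / 4) :=
  cut_survival_prob_bound_general n s k U hs hhalf hkU p hp0 hp1
end

section
/- Let G be a (k−1)-edge-connected graph on n ≥ 4k vertices, c > 1, and s = s_k(G). If each non-edge is added independently with probability p = 4(c+2)·log(n)/(s·n), then the probability that the resulting graph fails to be k-edge-connected is at most n^{−c}, assuming the number of minimum cuts (cuts of size k−1) of G is at most n². -/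
open scoped Classical

/-- The probability that the random set `S` of added non-edges of `G` (each non-edge
added independently with probability `p`) satisfies the event `A`. -/
noncomputable def addProb {V : Type*} [Fintype V] (G : SimpleGraph V) (p : ℝ)
    (A : Finset (Sym2 V) → Prop) : ℝ :=
  ∑ S ∈ Gᶜ.edgeFinset.powerset,
    if A S then p ^ S.card * (1 - p) ^ (Gᶜ.edgeFinset.card - S.card) else 0

/-- `G` is `k`-edge-connected: every nonempty proper subset has cut size at least `k`. -/
def kEdgeConnected {V : Type*} [Fintype V] (G : SimpleGraph V) (k : ℕ) : Prop :=
  ∀ U : Finset V, U.Nonempty → U ≠ Finset.univ → k ≤ @cutSize V _ G U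

/-!
If `G + S` is not `k`-edge-connected, some cut `U` of `G + S` has fewer than `k`
edges; it is then already a small cut of `G`, and since `G` is `(k-1)`-edge-connected, `S`
contains no non-edge crossing `U`. A small cut with `|U|, |Uᶜ| ≥ s` and `4k ≤ n` has at least
`s n / 4` crossing non-edges, so `S` avoids all of them with probability at most
`(1 - p) ^ (s n / 4) ≤ exp (-p s n / 4) = n ^ (-(c + 2))`. A union bound over the at most `n²`
small cuts finishes the proof.
-/

open Finset Real SimpleGraph

section Powerset

variable {α : Type*} [DecidableEq α]

lemma Finset.filter_disjoint_powerset (E T : Finset α) :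
    {S ∈ E.powerset | Disjoint S T} = (E \ T).powerset := by
  ext S
  simp [subset_sdiff]

lemma Finset.sum_powerset_disjoint_pow_mul_one_sub_pow {R : Type*} [CommRing R]
    {E T : Finset α} (hT : T ⊆ E) (p : R) :
    ∑ S ∈ E.powerset with Disjoint S T, p ^ #S * (1 - p) ^ (#E - #S) = (1 - p) ^ #T := by
  rw [filter_disjoint_powerset]
  calc _ = ∑ S ∈ (E \ T).powerset, p ^ #S * (1 - p) ^ (#(E \ T) - #S) * (1 - p) ^ #T := by
        refine sum_congr rfl fun S hS => ?_
        have := card_le_card (mem_powerset.1 hS)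
        have := card_sdiff_add_card_eq_card hT
        rw [mul_assoc, ← pow_add]
        congr 2
        omega
    _ = (1 - p) ^ #T := by
        rw [← sum_mul, sum_pow_mul_eq_add_pow, add_sub_cancel, one_pow, one_mul]

end Powerset

lemma one_sub_pow_le_rpow_neg {p x a : ℝ} {m : ℕ} (hp1 : p ≤ 1) (hx : 0 < x)
    (h : a * log x ≤ p * m) : (1 - p) ^ m ≤ x ^ (-a) :=
  calc (1 - p) ^ m ≤ exp (-p) ^ m :=
        pow_le_pow_left₀ (sub_nonneg.2 hp1) (one_sub_le_exp_neg p) m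
    _ = exp (-(p * m)) := by rw [← exp_nat_mul]; ring_nf
    _ ≤ exp (log x * -a) := exp_le_exp.2 (by linarith)
    _ = x ^ (-a) := (rpow_def_of_pos hx _).symm

section AddProb

variable {V : Type*} [Fintype V] (G : SimpleGraph V) {p : ℝ}

lemma addProb_disjoint {T : Finset (Sym2 V)} (hT : T ⊆ Gᶜ.edgeFinset) :
    addProb G p (Disjoint · T) = (1 - p) ^ #T := by
  rw [addProb, ← sum_powerset_disjoint_pow_mul_one_sub_pow hT p, sum_filter]
  congr! 2

lemma addProb_le_sum_of_forall_exists {ι : Type*} (hp0 : 0 ≤ p) (hp1 : p ≤ 1)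
    {A : Finset (Sym2 V) → Prop} (F : Finset ι) {B : ι → Finset (Sym2 V) → Prop}
    (h : ∀ S, A S → ∃ i ∈ F, B i S) :
    addProb G p A ≤ ∑ i ∈ F, addProb G p (B i) := by
  unfold addProb
  rw [sum_comm]
  refine sum_le_sum fun S _ => ?_
  have hw : 0 ≤ p ^ #S * (1 - p) ^ (#Gᶜ.edgeFinset - #S) := by
    have := sub_nonneg.2 hp1
    positivity
  split_ifs with hA
  · obtain ⟨i, hi, hB⟩ := h S hA
    calc _ = if B i S then p ^ #S * (1 - p) ^ (#Gᶜ.edgeFinset - #S) else 0 := (if_pos hB).symm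
      _ ≤ _ := single_le_sum (f := fun i => if B i S then _ else 0)
          (fun j _ => ite_nonneg hw le_rfl) hi
  · exact sum_nonneg fun j _ => ite_nonneg hw le_rfl

end AddProb

section Cuts

variable {V : Type*} [Fintype V] {G : SimpleGraph V} {k : ℕ} {U : Finset V}

lemma mem_smallCuts : U ∈ smallCuts G k ↔ U.Nonempty ∧ U ≠ univ ∧ cutSize G U < k := by
  simp [smallCuts]

lemma cutSize_mono {H : SimpleGraph V} (h : G ≤ H) (U : Finset V) :
    cutSize G U ≤ cutSize H U :=
  card_le_card <| monotone_filter_right _ fun _ _ hq => h hq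

variable (G) in
lemma cutSize_compl (U : Finset V) : cutSize G Uᶜ = cutSize G U := by
  unfold cutSize
  rw [compl_compl]
  refine card_nbij' Prod.swap Prod.swap ?_ ?_ (fun _ _ => rfl) (fun _ _ => rfl) <;>
  · intro x hx
    simp only [coe_filter, mem_product, Set.mem_ofPred_eq, Prod.fst_swap, Prod.snd_swap] at hx ⊢
    exact ⟨hx.1.symm, hx.2.symm⟩

lemma compl_mem_smallCuts (hU : U ∈ smallCuts G k) : Uᶜ ∈ smallCuts G k := by
  obtain ⟨hne, hne_univ, hcut⟩ := mem_smallCuts.1 hU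
  refine mem_smallCuts.2 ⟨?_, ?_, (cutSize_compl G U).trans_lt hcut⟩
  · rwa [nonempty_iff_ne_empty, Ne, compl_eq_empty_iff]
  · rwa [Ne, compl_eq_univ_iff, ← not_nonempty_iff_eq_empty, not_not]

lemma sk_le_card (hU : U ∈ smallCuts G k) : sk G k ≤ #U := by
  have hne : ((smallCuts G k).image card).Nonempty := ⟨#U, mem_image_of_mem _ hU⟩
  rw [sk, dif_pos hne]
  exact min'_le _ _ (mem_image_of_mem _ hU)

lemma sk_pos (hU : U ∈ smallCuts G k) : 0 < sk G k := by
  have hne : ((smallCuts G k).image card).Nonempty := ⟨#U, mem_image_of_mem _ hU⟩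
  rw [sk, dif_pos hne, lt_min'_iff, forall_mem_image]
  exact fun W hW => card_pos.2 (mem_smallCuts.1 hW).1

variable (G) in
noncomputable def crossingNonEdges (U : Finset V) : Finset (Sym2 V) :=
  {q ∈ U ×ˢ Uᶜ | ¬ G.Adj q.1 q.2}.image fun q => s(q.1, q.2)

lemma crossingNonEdges_subset_edgeFinset_compl : crossingNonEdges G U ⊆ Gᶜ.edgeFinset := by
  simp only [crossingNonEdges, image_subset_iff, mem_filter, mem_product, mem_compl]
  rintro ⟨a, b⟩ ⟨⟨ha, hb⟩, hab⟩
  dsimp only at ha hb hab ⊢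
  rw [mem_edgeFinset, mem_edgeSet, compl_adj]
  exact ⟨by rintro rfl; exact hb ha, hab⟩

variable (G) in
lemma card_crossingNonEdges_add_cutSize (U : Finset V) :
    #(crossingNonEdges G U) + cutSize G U = #U * #Uᶜ := by
  have hinj : Set.InjOn (fun q : V × V => s(q.1, q.2))
      (↑{q ∈ U ×ˢ Uᶜ | ¬ G.Adj q.1 q.2} : Set (V × V)) := by
    rintro ⟨a, b⟩ h₁ ⟨c, d⟩ h₂ he
    simp only [coe_filter, mem_product, mem_compl, Set.mem_ofPred_eq] at h₁ h₂
    rcases Sym2.eq_iff.1 he with ⟨rfl, rfl⟩ | ⟨rfl, rfl⟩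
    · rfl
    · exact absurd h₁.1.1 h₂.1.2
  rw [crossingNonEdges, card_image_of_injOn hinj, cutSize, add_comm,
    card_filter_add_card_filter_not, card_product]

lemma cutSize_lt_cutSize_sup_fromEdgeSet {S : Finset (Sym2 V)}
    (h : ¬ Disjoint S (crossingNonEdges G U)) :
    cutSize G U < cutSize (G ⊔ fromEdgeSet ↑S) U := by
  obtain ⟨e, heS, heT⟩ := not_disjoint_iff.1 h
  obtain ⟨⟨a, b⟩, hab, rfl⟩ := mem_image.1 heT
  simp only [mem_filter, mem_product] at hab heS
  obtain ⟨⟨ha, hb⟩, hnadj⟩ := hab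
  have hab : a ≠ b := by rintro rfl; exact mem_compl.1 hb ha
  unfold cutSize
  refine card_lt_card <| (ssubset_iff_of_subset fun q hq => ?_).2 ⟨(a, b), ?_, ?_⟩
  · simp only [mem_filter] at hq ⊢
    exact ⟨hq.1, Or.inl hq.2⟩
  all_goals simp [ha, hb, heS, hab, hnadj]

lemma exists_mem_smallCuts_disjoint_crossingNonEdges (hconn : kEdgeConnected G (k - 1))
    {S : Finset (Sym2 V)} (hS : ¬ kEdgeConnected (G ⊔ fromEdgeSet ↑S) k) :
    ∃ U ∈ smallCuts G k, Disjoint S (crossingNonEdges G U) := by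
  simp only [kEdgeConnected, not_forall, not_le] at hS
  obtain ⟨U, hne, hne_univ, hlt⟩ := hS
  have hle := cutSize_mono (le_sup_left : G ≤ G ⊔ fromEdgeSet ↑S) U
  refine ⟨U, mem_smallCuts.2 ⟨hne, hne_univ, hle.trans_lt hlt⟩, ?_⟩
  by_contra h
  have := cutSize_lt_cutSize_sup_fromEdgeSet h
  have := hconn U hne hne_univ
  omega

lemma sk_mul_card_le_four_mul_card_crossingNonEdges (hU : U ∈ smallCuts G k)
    (hnk : 4 * k ≤ Fintype.card V) :
    sk G k * Fintype.card V ≤ 4 * #(crossingNonEdges G U) := by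
  -- `2 |U| |Uᶜ| ≥ s (|U| + |Uᶜ|) = s n` and `4 · cutSize G U < 4k ≤ n ≤ s n`.
  have h₁ : sk G k * #U ≤ #Uᶜ * #U :=
    Nat.mul_le_mul_right _ (sk_le_card (compl_mem_smallCuts hU))
  have h₂ : sk G k * #Uᶜ ≤ #U * #Uᶜ := Nat.mul_le_mul_right _ (sk_le_card hU)
  have h₃ : Fintype.card V ≤ sk G k * Fintype.card V := Nat.le_mul_of_pos_left _ (sk_pos hU)
  have hcut := (mem_smallCuts.1 hU).2.2
  have hsplit := card_crossingNonEdges_add_cutSize G U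
  have hcard : #U + #Uᶜ = Fintype.card V := card_add_card_compl U
  rw [← hcard] at hnk h₃ ⊢
  nlinarith

lemma addProb_disjoint_crossingNonEdges_le (hU : U ∈ smallCuts G k)
    (hnk : 4 * k ≤ Fintype.card V) {a p : ℝ} (ha : 0 ≤ a)
    (hp : p = 4 * a * log (Fintype.card V) / (sk G k * Fintype.card V)) (hp1 : p ≤ 1) :
    addProb G p (Disjoint · (crossingNonEdges G U)) ≤ (Fintype.card V : ℝ) ^ (-a) := by
  rw [addProb_disjoint G crossingNonEdges_subset_edgeFinset_compl]
  have hn : (0 : ℝ) < Fintype.card V := by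
    obtain ⟨x, -⟩ := (mem_smallCuts.1 hU).1
    exact_mod_cast Fintype.card_pos_iff.2 ⟨x⟩
  have hsn : (0 : ℝ) < sk G k * Fintype.card V := by
    have := sk_pos hU
    positivity
  have hkey : (sk G k * Fintype.card V : ℝ) ≤ 4 * #(crossingNonEdges G U) := by
    exact_mod_cast sk_mul_card_le_four_mul_card_crossingNonEdges hU hnk
  refine one_sub_pow_le_rpow_neg hp1 hn ?_
  rw [hp, div_mul_eq_mul_div, le_div_iff₀ hsn]
  have := log_natCast_nonneg (Fintype.card V)
  calc a * log (Fintype.card V) * (sk G k * Fintype.card V)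
      ≤ a * log (Fintype.card V) * (4 * #(crossingNonEdges G U)) := by gcongr
    _ = 4 * a * log (Fintype.card V) * #(crossingNonEdges G U) := by ring

end Cuts

theorem increase_connectivity_whp_general {V : Type*} [Fintype V] (G : SimpleGraph V)
    (n s k : ℕ) (hn : n = Fintype.card V) (hnk : 4 * k ≤ n)
    (hconn : kEdgeConnected G (k - 1))
    (hs : s = sk G k)
    (hkarger : (smallCuts G k).card ≤ n ^ 2)
    (c p : ℝ) (hc : 1 < c) (hp : p = 4 * (c + 2) * Real.log n / (s * n)) (hp1 : p ≤ 1) :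
    addProb G p
        (fun S => ¬ kEdgeConnected (G ⊔ SimpleGraph.fromEdgeSet (↑S : Set (Sym2 V))) k)
      ≤ (n : ℝ) ^ (-c) := by
  subst hn hs
  have hp0 : 0 ≤ p := by
    have := log_natCast_nonneg (Fintype.card V)
    rw [hp]
    have : 0 ≤ c + 2 := by linarith
    positivity
  calc _ ≤ ∑ U ∈ smallCuts G k, addProb G p (Disjoint · (crossingNonEdges G U)) :=
        addProb_le_sum_of_forall_exists G hp0 hp1 _
          fun _ hS => exists_mem_smallCuts_disjoint_crossingNonEdges hconn hS
    _ ≤ ∑ _U ∈ smallCuts G k, (Fintype.card V : ℝ) ^ (-(c + 2)) :=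
        sum_le_sum fun U hU =>
          addProb_disjoint_crossingNonEdges_le hU hnk (by linarith) hp hp1
    _ = #(smallCuts G k) * (Fintype.card V : ℝ) ^ (-(c + 2)) := by
        rw [sum_const, nsmul_eq_mul]
    _ ≤ (Fintype.card V : ℝ) ^ (2 : ℝ) * (Fintype.card V : ℝ) ^ (-(c + 2)) := by
        rw [rpow_two]
        gcongr
        exact_mod_cast hkarger
    _ = (Fintype.card V : ℝ) ^ (-c) := by
        rw [← rpow_add' (by positivity) (by linarith)]
        ring_nf

/-- If `G` is `(k-1)`-edge-connected on `n ≥ 4k` vertices with at most `n²` minimum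
cuts, `s = s_k(G)`, `c > 1`, and each non-edge is added independently with probability
`p = 4(c+2)·log n/(s·n)`, then the probability that the resulting graph fails to be
`k`-edge-connected is at most `n^{-c}`. -/
theorem increase_connectivity_whp {V : Type*} [Fintype V] (G : SimpleGraph V)
    (n s k : ℕ) (hn : n = Fintype.card V) (hk : 1 ≤ k) (hnk : 4 * k ≤ n)
    (hconn : kEdgeConnected G (k - 1))
    (hs : s = sk G k)
    (hkarger : (smallCuts G k).card ≤ n ^ 2)
    (c p : ℝ) (hc : 1 < c) (hp : p = 4 * (c + 2) * Real.log n / (s * n)) (hp1 : p ≤ 1) :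
    addProb G p
        (fun S => ¬ kEdgeConnected (G ⊔ SimpleGraph.fromEdgeSet (↑S : Set (Sym2 V))) k)
      ≤ (n : ℝ) ^ (-c) :=
  increase_connectivity_whp_general G n s k hn hnk hconn hs hkarger c p hc hp hp1
end

section
/- Stochastic-closeness amplification: Let P be a monotone non-decreasing graph property, G ∉ P a graph on n vertices, and suppose that adding each non-edge independently with probability t/|Ē| yields a graph in P with probability at least 1 − n^{−c}. Then for any positive integer m with m·t ≤ |Ē|, adding each non-edge independently with probability m·t/|Ē| yields a graph in P with probability at least 1 − n^{−mc}. -/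
open scoped Classical

/-!
Realise `Add(G, mt)` by the union of `m` independent copies of `Add(G, t)`: the union of
independent `p`- and `q`-random subsets is a `(1 - (1 - p)(1 - q))`-random subset, so for a
monotone event the failure probability of the union is at most the product of the failure
probabilities. Hence `m` copies fail with probability at most `(n ^ (-c)) ^ m`, and the union of
`m` copies is a `(1 - (1 - t/N) ^ m)`-random subset, which by Bernoulli's inequality has
parameter at most `mt/N`.
-/

open Finset

namespace RandomSubset

variable {α : Type*} (E : Finset α)

/-- Expectation of `g` at the random subset of `E` containing each element independently with
probability `p`. -/
noncomputable def expect (p : ℝ) (g : Finset α → ℝ) : ℝ :=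
  ∑ S ∈ E.powerset, p ^ #S * (1 - p) ^ (#E - #S) * g S

noncomputable def prob (p : ℝ) (A : Finset α → Prop) : ℝ :=
  expect E p fun S => if A S then 1 else 0

variable {E}

lemma expect_insert [DecidableEq α] {a : α} (ha : a ∉ E) (p : ℝ) (g : Finset α → ℝ) :
    expect (insert a E) p g =
      (1 - p) * expect E p g + p * expect E p (fun T => g (insert a T)) := by
  rw [expect, sum_powerset_insert ha, expect, expect, mul_sum, mul_sum]
  congr 1 <;> refine sum_congr rfl fun T hT => ?_ <;> rw [mem_powerset] at hT
  · rw [card_insert_of_notMem ha, Nat.succ_sub (card_le_card hT), pow_succ]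
    ring
  · rw [card_insert_of_notMem ha, card_insert_of_notMem fun h => ha (hT h),
      Nat.add_sub_add_right, pow_succ]
    ring

lemma expect_const (p c : ℝ) : expect E p (fun _ => c) = c := by
  rw [expect, ← sum_mul, sum_pow_mul_eq_add_pow, add_sub_cancel, one_pow, one_mul]

lemma expect_linear (p a b : ℝ) (f g : Finset α → ℝ) :
    expect E p (fun S => a * f S + b * g S) = a * expect E p f + b * expect E p g := by
  simp only [expect, mul_sum, ← sum_add_distrib]
  exact sum_congr rfl fun _ _ => by ring

lemma expect_affine (p a b : ℝ) (f : Finset α → ℝ) :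
    expect E p (fun S => a + b * f S) = a + b * expect E p f := by
  simpa [expect_const] using expect_linear (E := E) p a b (fun _ => 1) f

lemma expect_mono {p : ℝ} (hp₀ : 0 ≤ p) (hp₁ : p ≤ 1) {f g : Finset α → ℝ}
    (hfg : ∀ S, f S ≤ g S) : expect E p f ≤ expect E p g :=
  sum_le_sum fun _ _ =>
    mul_le_mul_of_nonneg_left (hfg _) (by have := sub_nonneg.2 hp₁; positivity)

lemma expect_expect_union [DecidableEq α] (p q : ℝ) (g : Finset α → ℝ) :
    expect E p (fun S₁ => expect E q fun S₂ => g (S₁ ∪ S₂)) =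
      expect E (1 - (1 - p) * (1 - q)) g := by
  induction E using Finset.induction_on generalizing g with
  | empty => simp [expect]
  | @insert a E ha ih =>
    have collapse : ∀ x : ℝ, (1 - q) * x + q * x = x := fun x => by ring
    simp only [expect_insert ha, union_insert, insert_union, insert_idem, collapse]
    rw [expect_linear, ih, ih (fun T => g (insert a T))]
    ring

lemma prob_nonneg {p : ℝ} (hp₀ : 0 ≤ p) (hp₁ : p ≤ 1) (A : Finset α → Prop) :
    0 ≤ prob E p A := by
  rw [← expect_const (E := E) p 0, prob]
  exact expect_mono hp₀ hp₁ fun S => by split_ifs <;> norm_num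

lemma prob_le_one {p : ℝ} (hp₀ : 0 ≤ p) (hp₁ : p ≤ 1) (A : Finset α → Prop) :
    prob E p A ≤ 1 := by
  rw [← expect_const (E := E) p 1, prob]
  exact expect_mono hp₀ hp₁ fun S => by split_ifs <;> norm_num

/-- If either of two independent random subsets lies in the monotone event `A`, so does their
union. -/
lemma one_sub_prob_le_mul {A : Finset α → Prop} (hA : Monotone A) {p q : ℝ} (hp₀ : 0 ≤ p)
    (hp₁ : p ≤ 1) (hq₀ : 0 ≤ q) (hq₁ : q ≤ 1) :
    1 - prob E (1 - (1 - p) * (1 - q)) A ≤ (1 - prob E p A) * (1 - prob E q A) := by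
  have union_mem : ∀ S₁ S₂, ((if A S₁ then 1 else 0) + (1 - if A S₁ then 1 else 0) *
      (if A S₂ then 1 else 0) : ℝ) ≤ if A (S₁ ∪ S₂) then 1 else 0 := fun S₁ S₂ => by
    by_cases h₁ : A S₁
    · simp [h₁, hA subset_union_left h₁]
    by_cases h₂ : A S₂
    · simp [h₁, h₂, hA subset_union_right h₂]
    · simp only [h₁, h₂, if_false]
      split_ifs <;> norm_num
  have inner : ∀ S₁, (expect E q fun S₂ => (if A S₁ then 1 else 0) +
      (1 - if A S₁ then 1 else 0) * (if A S₂ then 1 else 0)) =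
        prob E q A + (1 - prob E q A) * if A S₁ then 1 else 0 := fun S₁ => by
    rw [expect_affine, prob]
    ring
  calc 1 - prob E (1 - (1 - p) * (1 - q)) A
      = 1 - expect E p fun S₁ => expect E q fun S₂ => if A (S₁ ∪ S₂) then 1 else 0 := by
        rw [prob, ← expect_expect_union p q]
    _ ≤ 1 - expect E p fun S₁ => expect E q fun S₂ => (if A S₁ then 1 else 0) +
          (1 - if A S₁ then 1 else 0) * (if A S₂ then 1 else 0) :=
        sub_le_sub_left
          (expect_mono hp₀ hp₁ fun S₁ => expect_mono hq₀ hq₁ (union_mem S₁)) 1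
    _ = (1 - prob E p A) * (1 - prob E q A) := by
        simp only [inner, expect_affine]
        rw [prob, prob]
        ring

lemma one_sub_prob_le_pow {A : Finset α → Prop} (hA : Monotone A) {q : ℝ} (hq₀ : 0 ≤ q)
    (hq₁ : q ≤ 1) (m : ℕ) : 1 - prob E (1 - (1 - q) ^ m) A ≤ (1 - prob E q A) ^ m := by
  induction m with
  | zero => simpa using prob_nonneg le_rfl zero_le_one A
  | succ m ih =>
    have hpow₀ : 0 ≤ (1 - q) ^ m := pow_nonneg (sub_nonneg.2 hq₁) m
    have hpow₁ : (1 - q) ^ m ≤ 1 := pow_le_one₀ (sub_nonneg.2 hq₁) (by linarith)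
    calc 1 - prob E (1 - (1 - q) ^ (m + 1)) A
        = 1 - prob E (1 - (1 - q) * (1 - (1 - (1 - q) ^ m))) A := by rw [sub_sub_cancel, pow_succ']
      _ ≤ (1 - prob E q A) * (1 - prob E (1 - (1 - q) ^ m) A) :=
        one_sub_prob_le_mul hA hq₀ hq₁ (by linarith) (by linarith)
      _ ≤ (1 - prob E q A) * (1 - prob E q A) ^ m :=
        mul_le_mul_of_nonneg_left ih (sub_nonneg.2 (prob_le_one hq₀ hq₁ A))
      _ = (1 - prob E q A) ^ (m + 1) := (pow_succ' _ m).symm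

/-- A `p'`-random subset is the union of a `p`-random one and an independent
`(p' - p) / (1 - p)`-random one. -/
lemma prob_mono {A : Finset α → Prop} (hA : Monotone A) {p p' : ℝ} (hp₀ : 0 ≤ p)
    (hpp' : p ≤ p') (hp'₁ : p' ≤ 1) : prob E p A ≤ prob E p' A := by
  obtain rfl | hp₁ := (hpp'.trans hp'₁).eq_or_lt
  · rw [le_antisymm hp'₁ hpp']
  have h1p : 0 < 1 - p := sub_pos.2 hp₁
  have hs₀ : 0 ≤ (p' - p) / (1 - p) := div_nonneg (sub_nonneg.2 hpp') h1p.le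
  have hs₁ : (p' - p) / (1 - p) ≤ 1 := (div_le_one h1p).2 (by linarith)
  have hunion : 1 - (1 - p) * (1 - (p' - p) / (1 - p)) = p' := by
    field_simp
    ring
  have key := one_sub_prob_le_mul (E := E) hA hp₀ hp₁.le hs₀ hs₁
  rw [hunion] at key
  linarith [mul_le_of_le_one_right (sub_nonneg.2 (prob_le_one (E := E) hp₀ hp₁.le A))
    (sub_le_self 1 (prob_nonneg (E := E) hs₀ hs₁ A))]

end RandomSubset

lemma addProb_eq_prob {V : Type*} [Fintype V] (G : SimpleGraph V) (p : ℝ)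
    (A : Finset (Sym2 V) → Prop) : addProb G p A = RandomSubset.prob Gᶜ.edgeFinset p A := by
  rw [addProb, RandomSubset.prob, RandomSubset.expect]
  refine sum_congr rfl fun S _ => ?_
  split_ifs <;> simp

theorem stochastic_closeness_amplification_general {V : Type*} [Fintype V] (G : SimpleGraph V)
    (P : SimpleGraph V → Prop)
    (hmono : ∀ H H' : SimpleGraph V, H ≤ H' → P H → P H')
    (n : ℕ)
    (N : ℕ)
    (c : ℝ)
    (t : ℝ) (ht0 : 0 ≤ t) (htN : t ≤ N)
    (hclose : 1 - (n : ℝ) ^ (-c) ≤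
      addProb G (t / N) (fun S => P (G ⊔ SimpleGraph.fromEdgeSet (↑S : Set (Sym2 V)))))
    (m : ℕ) (hmt : (m : ℝ) * t ≤ N) :
    1 - (n : ℝ) ^ (-((m : ℝ) * c)) ≤
      addProb G ((m : ℝ) * t / N)
        (fun S => P (G ⊔ SimpleGraph.fromEdgeSet (↑S : Set (Sym2 V)))) := by
  have hA : Monotone fun S : Finset (Sym2 V) => P (G ⊔ SimpleGraph.fromEdgeSet ↑S) :=
    fun S T hST => hmono _ _ (sup_le_sup_left (SimpleGraph.fromEdgeSet_mono (coe_subset.2 hST)) G)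
  have hq₀ : 0 ≤ t / N := by positivity
  have hq₁ : t / N ≤ 1 := div_le_one_of_le₀ htN N.cast_nonneg
  have hmq₁ : m * (t / N) ≤ 1 := by
    rw [← mul_div_assoc]
    exact div_le_one_of_le₀ hmt N.cast_nonneg
  have hpow₁ : (1 - t / N) ^ m ≤ 1 := pow_le_one₀ (sub_nonneg.2 hq₁) (by linarith)
  have bernoulli : 1 - (1 - t / N) ^ m ≤ m * (t / N) := by
    linarith [one_add_mul_sub_le_pow (a := 1 - t / N) (by linarith) m]
  rw [addProb_eq_prob] at hclose ⊢
  rw [mul_div_assoc]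
  calc 1 - (n : ℝ) ^ (-((m : ℝ) * c))
      = 1 - ((n : ℝ) ^ (-c)) ^ m := by
        rw [← Real.rpow_mul_natCast n.cast_nonneg, neg_mul, mul_comm]
    _ ≤ 1 - (1 - RandomSubset.prob _ (t / N) _) ^ m :=
      sub_le_sub_left (pow_le_pow_left₀ (sub_nonneg.2 (RandomSubset.prob_le_one hq₀ hq₁ _))
        (by linarith) m) 1
    _ ≤ RandomSubset.prob _ (1 - (1 - t / N) ^ m) _ :=
      sub_le_comm.1 (RandomSubset.one_sub_prob_le_pow hA hq₀ hq₁ m)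
    _ ≤ RandomSubset.prob _ (m * (t / N)) _ :=
      RandomSubset.prob_mono hA (by linarith) bernoulli hmq₁

/-- Stochastic-closeness amplification: if adding each non-edge with probability
`t/|Ē|` yields a graph in the monotone property `P` with probability at least
`1 - n^{-c}`, then for `m·t ≤ |Ē|`, adding each non-edge with probability `m·t/|Ē|`
yields a graph in `P` with probability at least `1 - n^{-mc}`. -/
theorem stochastic_closeness_amplification {V : Type*} [Fintype V] (G : SimpleGraph V)
    (P : SimpleGraph V → Prop)
    (hmono : ∀ H H' : SimpleGraph V, H ≤ H' → P H → P H')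
    (hG : ¬ P G)
    (n : ℕ) (hn : n = Fintype.card V) (hn2 : 2 ≤ n)
    (N : ℕ) (hN : N = Gᶜ.edgeFinset.card) (hNpos : 0 < N)
    (c : ℝ) (hc : 1 < c)
    (t : ℝ) (ht0 : 0 ≤ t) (htN : t ≤ N)
    (hclose : 1 - (n : ℝ) ^ (-c) ≤
      addProb G (t / N) (fun S => P (G ⊔ SimpleGraph.fromEdgeSet (↑S : Set (Sym2 V)))))
    (m : ℕ) (hm : 1 ≤ m) (hmt : (m : ℝ) * t ≤ N) :
    1 - (n : ℝ) ^ (-((m : ℝ) * c)) ≤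
      addProb G ((m : ℝ) * t / N)
        (fun S => P (G ⊔ SimpleGraph.fromEdgeSet (↑S : Set (Sym2 V)))) :=
  stochastic_closeness_amplification_general G P hmono n N c t ht0 htN hclose m hmt
end
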